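/- arXiv:2603.06155 — 2 statements merged into one kernel-verified Lean document; each statement's English description precedes it below -/
import Mathlib

section
/- Let 𝒪 be an infinite order ideal in P = K[x_0,…,x_n] and let J ⊆ P be a homogeneous ideal such that for every d ≥ 0 the residue classes of the terms of 𝒪_d form a K-vector space basis of P_d/J_d. Then there exists exactly one homogeneous ∂𝒪-basis of J. -/
open MvPolynomial

namespace Border

/-- A term of `K[x_0, …, x_n]`, identified with its exponent vector. -/
abbrev Term (n : ℕ) := Fin (n + 1) →₀ ℕ

variable {n : ℕ}

/-- The (standard) degree of a term. -/
def tdeg (m : Term n) : ℕ := ∑ i, m i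

/-- An order ideal: a nonempty set of terms closed under divisors. -/
def IsOrderIdeal (O : Set (Term n)) : Prop :=
  O.Nonempty ∧ ∀ τ ∈ O, ∀ τ' : Term n, τ' ≤ τ → τ' ∈ O

/-- The border `∂𝒪 = (x_0·𝒪 ∪ ⋯ ∪ x_n·𝒪) ∖ 𝒪`. -/
def border (O : Set (Term n)) : Set (Term n) :=
  {σ | σ ∉ O ∧ ∃ r : Fin (n + 1), ∃ τ ∈ O, σ = τ + Finsupp.single r 1}

/-- Multiplicative set of a border term `σ`, with respect to a labeling `lab` of the border:
`𝒯_σ = {η : σ' ∤ η·σ for every border term σ' with a larger label}`. -/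
def mulSet (O : Set (Term n)) (lab : Term n → ℕ) (σ : Term n) : Set (Term n) :=
  {η | ∀ σ' ∈ border O, lab σ < lab σ' → ¬ σ' ≤ η + σ}

/-- The cone `C(σ) = {η·σ : η ∈ 𝒯_σ}`. -/
def cone (O : Set (Term n)) (lab : Term n → ℕ) (σ : Term n) : Set (Term n) :=
  (fun η => η + σ) '' mulSet O lab σ

/-- A labeling of the border which is injective and ordered increasingly by degree. -/
def DegOrderedLabeling (O : Set (Term n)) (lab : Term n → ℕ) : Prop :=
  Set.InjOn lab (border O) ∧
    ∀ σ ∈ border O, ∀ σ' ∈ border O, lab σ < lab σ' → tdeg σ ≤ tdeg σ'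

/-- Iterated border closures: `∂⁰𝒪 := 𝒪`, and the `(k+1)`-st closure adds the border. -/
def borderClosure (O : Set (Term n)) : ℕ → Set (Term n)
  | 0 => O
  | k + 1 => borderClosure O k ∪ border (borderClosure O k)

/-- The index `ind_𝒪(τ)`: the least `k` with `τ ∈ ∂^k𝒪`. -/
noncomputable def ind (O : Set (Term n)) (τ : Term n) : ℕ :=
  sInf {k | τ ∈ borderClosure O k}

/-- Degree-`d` part of a set of terms. -/
def Od (O : Set (Term n)) (d : ℕ) : Set (Term n) := {τ | τ ∈ O ∧ tdeg τ = d}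

variable {K : Type*} [Field K]

/-- The index of a nonzero polynomial: the maximal index of a term of its support. -/
noncomputable def indP (O : Set (Term n)) (f : MvPolynomial (Fin (n + 1)) K) : ℕ :=
  f.support.sup (ind O)

/-- A homogeneous `∂𝒪`-prebasis: a family `g σ = σ - Σ_{τ ∈ 𝒪_{deg σ}} c_{στ} τ`. -/
def IsPrebasis (O : Set (Term n)) (g : Term n → MvPolynomial (Fin (n + 1)) K) : Prop :=
  ∀ σ ∈ border O, ∀ τ ∈ (monomial σ (1 : K) - g σ).support, τ ∈ O ∧ tdeg τ = tdeg σ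

/-- The set of border reductors `𝒯G = {η·g_σ : σ ∈ ∂𝒪, η ∈ 𝒯_σ}`. -/
def reductors (O : Set (Term n)) (lab : Term n → ℕ)
    (g : Term n → MvPolynomial (Fin (n + 1)) K) : Set (MvPolynomial (Fin (n + 1)) K) :=
  {p | ∃ σ ∈ border O, ∃ η ∈ mulSet O lab σ, p = monomial η (1 : K) * g σ}

/-- The degree-`d` border reductors `𝒯G_d = 𝒯G ∩ P_d`. -/
def reductorsDeg (O : Set (Term n)) (lab : Term n → ℕ)
    (g : Term n → MvPolynomial (Fin (n + 1)) K) (d : ℕ) :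
    Set (MvPolynomial (Fin (n + 1)) K) :=
  reductors O lab g ∩ {p | p.IsHomogeneous d}

/-- One step of the border reduction relation `→_G`. -/
def Step (O : Set (Term n)) (lab : Term n → ℕ)
    (g : Term n → MvPolynomial (Fin (n + 1)) K)
    (f h : MvPolynomial (Fin (n + 1)) K) : Prop :=
  ∃ σ ∈ border O, ∃ η ∈ mulSet O lab σ, η + σ ∈ f.support ∧
    h = f - f.coeff (η + σ) • (monomial η (1 : K) * g σ)

/-- The border reduction relation `→⁺_G` (finitely many, possibly zero, steps). -/
def Reduces (O : Set (Term n)) (lab : Term n → ℕ)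
    (g : Term n → MvPolynomial (Fin (n + 1)) K) :
    MvPolynomial (Fin (n + 1)) K → MvPolynomial (Fin (n + 1)) K → Prop :=
  Relation.ReflTransGen (Step O lab g)

/-- The `K`-vector space spanned by a set of terms. -/
noncomputable def spanTerms (K : Type*) [Field K] (S : Set (Term n)) :
    Submodule K (MvPolynomial (Fin (n + 1)) K) :=
  Submodule.span K ((fun τ => monomial τ (1 : K)) '' S)

/-- The ideal `(G)` generated by a `∂𝒪`-prebasis. -/
noncomputable def idealG (O : Set (Term n)) (g : Term n → MvPolynomial (Fin (n + 1)) K) :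
    Ideal (MvPolynomial (Fin (n + 1)) K) :=
  Ideal.span (g '' border O)

/-- The degree-`d` part `I_d` of an ideal, as a `K`-vector subspace. -/
noncomputable def degPart (I : Ideal (MvPolynomial (Fin (n + 1)) K)) (d : ℕ) :
    Submodule K (MvPolynomial (Fin (n + 1)) K) :=
  Submodule.restrictScalars K I ⊓ homogeneousSubmodule (Fin (n + 1)) K d

/-- Homogeneous ideal. -/
def IsHomogeneousIdeal (I : Ideal (MvPolynomial (Fin (n + 1)) K)) : Prop :=
  ∀ f ∈ I, ∀ d : ℕ, homogeneousComponent d f ∈ I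

/-- `G` is a homogeneous `∂𝒪`-basis of `J`: it is a prebasis contained in `J` and for every
`d` one has `P_d = J_d ⊕ ⟨𝒪_d⟩`, i.e. the residue classes of `𝒪_d` are a basis of `P_d/J_d`. -/
def IsBorderBasisOf (O : Set (Term n)) (g : Term n → MvPolynomial (Fin (n + 1)) K)
    (J : Ideal (MvPolynomial (Fin (n + 1)) K)) : Prop :=
  IsPrebasis O g ∧ (∀ σ ∈ border O, g σ ∈ J) ∧
    ∀ d : ℕ, degPart J d ⊔ spanTerms K (Od O d) = homogeneousSubmodule (Fin (n + 1)) K d ∧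
      Disjoint (degPart J d) (spanTerms K (Od O d))

/-- An `m`-lower representation of `f` by `𝒯G`: `f = Σ c_j • η_j·g_{σ_j}` with distinct
pairs `(η_j, σ_j)`, `η_j ∈ 𝒯_{σ_j}` and `ind(η_j σ_j) ≤ m`. -/
def HasLRep (O : Set (Term n)) (lab : Term n → ℕ)
    (g : Term n → MvPolynomial (Fin (n + 1)) K)
    (f : MvPolynomial (Fin (n + 1)) K) (m : ℕ) : Prop :=
  ∃ (s : Finset (Term n × Term n)) (c : Term n × Term n → K),
    (∀ p ∈ s, p.2 ∈ border O ∧ p.1 ∈ mulSet O lab p.2 ∧ ind O (p.1 + p.2) ≤ m) ∧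
    f = ∑ p ∈ s, c p • (monomial p.1 (1 : K) * g p.2)

/-- An `m`-lower representation of `f` by `𝒯G_d`. -/
def HasLRepDeg (O : Set (Term n)) (lab : Term n → ℕ)
    (g : Term n → MvPolynomial (Fin (n + 1)) K)
    (f : MvPolynomial (Fin (n + 1)) K) (m d : ℕ) : Prop :=
  ∃ (s : Finset (Term n × Term n)) (c : Term n × Term n → K),
    (∀ p ∈ s, p.2 ∈ border O ∧ p.1 ∈ mulSet O lab p.2 ∧ ind O (p.1 + p.2) ≤ m ∧
      (monomial p.1 (1 : K) * g p.2).IsHomogeneous d) ∧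
    f = ∑ p ∈ s, c p • (monomial p.1 (1 : K) * g p.2)

/-- The subtype of terms of `𝒪` of degree `d`. -/
abbrev OdSub (O : Set (Term n)) (d : ℕ) : Type _ := {τ : Term n // τ ∈ Od O d}

lemma tdeg_component_lt {d : ℕ} (m : Term n) (h : tdeg m = d) (i : Fin (n + 1)) :
    m i < d + 1 := by
  have : m i ≤ tdeg m :=
    Finset.single_le_sum (f := fun j => m j) (fun j _ => Nat.zero_le _) (Finset.mem_univ i)
  omega

instance (O : Set (Term n)) (d : ℕ) : Finite (OdSub O d) := by
  have hinj : Function.Injective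
      (fun τ : OdSub O d => fun i : Fin (n + 1) =>
        (⟨τ.1 i, tdeg_component_lt τ.1 τ.2.2 i⟩ : Fin (d + 1))) := by
    intro a b hab
    apply Subtype.ext
    apply Finsupp.ext
    intro i
    simpa using congrArg Fin.val (congrFun hab i)
  exact Finite.of_injective _ hinj

noncomputable instance (O : Set (Term n)) (d : ℕ) : Fintype (OdSub O d) :=
  Fintype.ofFinite _

open scoped Classical in
/-- The `r`-th `d`-graded formal multiplication matrix of a prebasis `G`,
with rows indexed by `𝒪_{d+1}` and columns by `𝒪_d`. -/
noncomputable def multMatrix (O : Set (Term n))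
    (g : Term n → MvPolynomial (Fin (n + 1)) K) (r : Fin (n + 1)) (d : ℕ) :
    Matrix (OdSub O (d + 1)) (OdSub O d) K :=
  Matrix.of fun τ' τ =>
    if τ.1 + Finsupp.single r 1 ∈ O then
      (if τ.1 + Finsupp.single r 1 = τ'.1 then 1 else 0)
    else (monomial (τ.1 + Finsupp.single r 1) (1 : K)
            - g (τ.1 + Finsupp.single r 1)).coeff τ'.1

/-- The minimum degree of a border term. -/
noncomputable def minDegBorder (O : Set (Term n)) : ℕ := sInf (tdeg '' border O)

/-- The `d`-th Macaulay transformation `a^{⟨d⟩}`, computed greedily. -/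
noncomputable def macaulay : ℕ → ℕ → ℕ
  | 0, _ => 0
  | d + 1, a =>
    if a = 0 then 0
    else
      Nat.choose (sSup {k | Nat.choose k (d + 1) ≤ a} + 1) (d + 2) +
        macaulay d (a - Nat.choose (sSup {k | Nat.choose k (d + 1) ≤ a}) (d + 1))

/-- An ideal is generated in degrees `≤ m` if it is generated by its homogeneous
elements of degree `≤ m`. -/
def GeneratedInDegLE (I : Ideal (MvPolynomial (Fin (n + 1)) K)) (m : ℕ) : Prop :=
  I = Ideal.span {f | f ∈ I ∧ ∃ d ≤ m, f.IsHomogeneous d}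

/-!
Given `P_d = J_d ⊕ ⟨𝒪_d⟩` for all `d`, `g` is a `∂𝒪`-basis of `J` exactly when every `g σ` is
the `J_d`-component of `σ`, where `d = deg σ` (`σ - g σ ∈ ⟨𝒪_d⟩` forces `g σ` to be homogeneous of
degree `d`). That component exists and is unique.
-/

lemma Submodule.existsUnique_sub_mem_of_disjoint {R M : Type*} [Ring R] [AddCommGroup M]
    [Module R M] {A B : Submodule R M} (hAB : Disjoint A B) {x : M} (hx : x ∈ A ⊔ B) :
    ∃! a, a ∈ A ∧ x - a ∈ B := by
  obtain ⟨a, ha, b, hb, rfl⟩ := Submodule.mem_sup.1 hx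
  refine ⟨a, ⟨ha, by simpa using hb⟩, fun a' ⟨ha', hb'⟩ => ?_⟩
  have hA : a' - a ∈ A := sub_mem ha' ha
  have hB : a' - a ∈ B := by convert sub_mem hb hb' using 1; abel
  exact sub_eq_zero.1 (Submodule.disjoint_def.1 hAB _ hA hB)

lemma tdeg_eq_degree (m : Term n) : tdeg m = m.degree := by
  rw [Finsupp.degree, tdeg]
  exact (Finset.sum_subset m.support.subset_univ
    (fun x _ hx => Finsupp.notMem_support_iff.1 hx)).symm

lemma monomial_mem_homogeneousSubmodule_tdeg (σ : Term n) :
    monomial σ (1 : K) ∈ homogeneousSubmodule (Fin (n + 1)) K (tdeg σ) :=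
  (mem_homogeneousSubmodule _ _).2 (isHomogeneous_monomial _ (tdeg_eq_degree σ).symm)

lemma mem_spanTerms_iff {S : Set (Term n)} {f : MvPolynomial (Fin (n + 1)) K} :
    f ∈ spanTerms K S ↔ ↑f.support ⊆ S := by
  have : spanTerms K S = AddMonoidAlgebra.supported K K S := by
    simp [spanTerms, AddMonoidAlgebra.supported_eq_span_single, single_eq_monomial]
  rw [this, AddMonoidAlgebra.mem_supported]
  rfl

lemma spanTerms_le_homogeneousSubmodule (O : Set (Term n)) (d : ℕ) :
    spanTerms K (Od O d) ≤ homogeneousSubmodule (Fin (n + 1)) K d := by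
  refine Submodule.span_le.2 ?_
  rintro _ ⟨τ, hτ, rfl⟩
  exact hτ.2 ▸ monomial_mem_homogeneousSubmodule_tdeg τ

lemma isPrebasis_iff {O : Set (Term n)} {g : Term n → MvPolynomial (Fin (n + 1)) K} :
    IsPrebasis O g ↔ ∀ σ ∈ border O, monomial σ 1 - g σ ∈ spanTerms K (Od O (tdeg σ)) := by
  simp only [IsPrebasis, mem_spanTerms_iff]
  rfl

lemma isBorderBasisOf_iff {O : Set (Term n)} {g : Term n → MvPolynomial (Fin (n + 1)) K}
    {J : Ideal (MvPolynomial (Fin (n + 1)) K)}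
    (hres : ∀ d : ℕ,
      degPart J d ⊔ spanTerms K (Od O d) = homogeneousSubmodule (Fin (n + 1)) K d ∧
      Disjoint (degPart J d) (spanTerms K (Od O d))) :
    IsBorderBasisOf O g J ↔ ∀ σ ∈ border O,
      g σ ∈ degPart J (tdeg σ) ∧ monomial σ 1 - g σ ∈ spanTerms K (Od O (tdeg σ)) := by
  refine ⟨fun ⟨hpre, hJ, _⟩ σ hσ => ⟨?_, isPrebasis_iff.1 hpre σ hσ⟩,
    fun h => ⟨isPrebasis_iff.2 fun σ hσ => (h σ hσ).2, fun σ hσ => (h σ hσ).1.1, hres⟩⟩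
  have hhom := spanTerms_le_homogeneousSubmodule O _ (isPrebasis_iff.1 hpre σ hσ)
  refine Submodule.mem_inf.2 ⟨hJ σ hσ, ?_⟩
  simpa using sub_mem (monomial_mem_homogeneousSubmodule_tdeg σ) hhom

theorem existsUnique_borderBasis_general (O : Set (Term n))
    (J : Ideal (MvPolynomial (Fin (n + 1)) K))
    (hres : ∀ d : ℕ,
      degPart J d ⊔ spanTerms K (Od O d) = homogeneousSubmodule (Fin (n + 1)) K d ∧
      Disjoint (degPart J d) (spanTerms K (Od O d))) :
    ∃ g : Term n → MvPolynomial (Fin (n + 1)) K, IsBorderBasisOf O g J ∧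
      ∀ g' : Term n → MvPolynomial (Fin (n + 1)) K, IsBorderBasisOf O g' J →
        ∀ σ ∈ border O, g' σ = g σ := by
  have h : ∀ σ ∈ border O, ∃! p, p ∈ degPart J (tdeg σ) ∧
      monomial σ 1 - p ∈ spanTerms K (Od O (tdeg σ)) := fun σ _ =>
    Submodule.existsUnique_sub_mem_of_disjoint (hres _).2
      ((hres _).1 ▸ monomial_mem_homogeneousSubmodule_tdeg σ)
  choose! g hg huniq using h
  exact ⟨g, (isBorderBasisOf_iff hres).2 hg,
    fun g' hg' σ hσ => huniq σ hσ _ ((isBorderBasisOf_iff hres).1 hg' σ hσ)⟩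

/-- **Existence and uniqueness.** If `𝒪` is an infinite order ideal and `J` a homogeneous
ideal such that the residue classes of `𝒪_d` form a basis of `P_d/J_d` for every `d`, then
there is exactly one homogeneous `∂𝒪`-basis of `J`. -/
theorem existsUnique_borderBasis (O : Set (Term n)) (hO : IsOrderIdeal O)
    (hinf : O.Infinite)
    (J : Ideal (MvPolynomial (Fin (n + 1)) K)) (hJ : IsHomogeneousIdeal J)
    (hres : ∀ d : ℕ,
      degPart J d ⊔ spanTerms K (Od O d) = homogeneousSubmodule (Fin (n + 1)) K d ∧
      Disjoint (degPart J d) (spanTerms K (Od O d))) :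
    ∃ g : Term n → MvPolynomial (Fin (n + 1)) K, IsBorderBasisOf O g J ∧
      ∀ g' : Term n → MvPolynomial (Fin (n + 1)) K, IsBorderBasisOf O g' J →
        ∀ σ ∈ border O, g' σ = g σ :=
  existsUnique_borderBasis_general O J hres

end Border
end

section
/- Let 𝒪 be an infinite order ideal in P = K[x_0,…,x_n] and let G be a homogeneous ∂𝒪-prebasis. Then G is a homogeneous ∂𝒪-basis if and only if for every d ≥ mindeg(∂𝒪) − 1 and all 0 ≤ r < s ≤ n, the graded formal multiplication matrices of G satisfy Χ_r^{(d+1)}·Χ_s^{(d)} = Χ_s^{(d+1)}·Χ_r^{(d)}. -/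
open MvPolynomial

namespace Border

variable {n : ℕ}

variable {K : Type*} [Field K]

/-!
The matrices `Χ_r^{(d)}` are the matrices of the operators `mulOp O g r : ⟨𝒪_d⟩ → ⟨𝒪_{d+1}⟩`
("multiply by `x_r` and rewrite border terms `σ` as `σ - g_σ`"), so the conditions say that these
operators commute on `⟨𝒪⟩`. Below degree `mindeg(∂𝒪) - 1` they commute for free: `x_r τ` and
`x_s τ` still lie in `𝒪`, so both products are the one-step reduction of `x_r x_s τ`.

If the operators commute, they generate a commutative algebra and `N f := f(mulOp) 1` is a normal
form map: `f - N f ∈ (G)`, `N` kills `(G)` and fixes `⟨𝒪⟩`, whence `P_d = (G)_d ⊕ ⟨𝒪_d⟩`.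
Conversely, both `mulOp_r (mulOp_s τ)` and `mulOp_s (mulOp_r τ)` are congruent to `x_r x_s τ`
modulo `(G)`, so their difference lies in `(G)_{d+2} ∩ ⟨𝒪_{d+2}⟩ = 0`.
-/

open Finsupp (single)

lemma tdeg_add (μ ν : Term n) : tdeg (μ + ν) = tdeg μ + tdeg ν := by
  simp [tdeg, Finset.sum_add_distrib]

lemma tdeg_single (r : Fin (n + 1)) : tdeg (single r 1 : Term n) = 1 := by
  simp [tdeg, Finsupp.single_apply]

@[elab_as_elim]
lemma Term.induction_on_add_single {M : Term n → Prop} (zero : M 0)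
    (add_single : ∀ μ r, M μ → M (μ + single r 1)) (μ : Term n) : M μ := by
  induction μ using Finsupp.induction with
  | zero => exact zero
  | single_add i b f _ hb ih =>
    clear hb
    induction b with
    | zero => simpa using ih
    | succ b ihb =>
      rw [Finsupp.single_add, add_right_comm]
      exact add_single _ i ihb

lemma monomial_add_single_one (τ : Term n) (r : Fin (n + 1)) :
    monomial (τ + single r 1) (1 : K) = X r * monomial τ 1 := by
  rw [monomial_add_single, pow_one, mul_comm]

variable {O : Set (Term n)}

lemma IsOrderIdeal.zero_mem (hO : IsOrderIdeal O) : (0 : Term n) ∈ O :=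
  hO.1.elim fun τ hτ => hO.2 τ hτ 0 zero_le

lemma IsOrderIdeal.mem_of_add_single (hO : IsOrderIdeal O) {μ : Term n} {r : Fin (n + 1)}
    (h : μ + single r 1 ∈ O) : μ ∈ O :=
  hO.2 _ h μ le_self_add

lemma IsOrderIdeal.minDegBorder_le_tdeg (hO : IsOrderIdeal O) {μ : Term n} (hμ : μ ∉ O) :
    minDegBorder O ≤ tdeg μ := by
  induction μ using Term.induction_on_add_single with
  | zero => exact absurd hO.zero_mem hμ
  | add_single μ r ih =>
    by_cases h : μ ∈ O
    · exact Nat.sInf_le ⟨_, ⟨hμ, r, μ, h, rfl⟩, rfl⟩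
    · rw [tdeg_add]
      exact (ih h).trans (Nat.le_add_right _ _)

lemma IsOrderIdeal.mem_of_tdeg_lt (hO : IsOrderIdeal O) {μ : Term n}
    (h : tdeg μ < minDegBorder O) : μ ∈ O := by
  by_contra hμ
  exact h.not_ge (hO.minDegBorder_le_tdeg hμ)

section RestrictSupport

variable {σ R : Type*} [CommSemiring R]

lemma basisRestrictSupport_repr_apply (s : Set (σ →₀ ℕ)) (p : restrictSupport R s) (μ : s) :
    (basisRestrictSupport R s).repr p μ = (p : MvPolynomial σ R).coeff μ :=
  rfl

lemma basisRestrictSupport_apply (s : Set (σ →₀ ℕ)) (μ : s) :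
    (basisRestrictSupport R s μ : MvPolynomial σ R) = monomial μ.1 1 := by
  classical
  rw [← Subtype.coe_mk (monomial μ.1 (1 : R)) ((monomial_mem_restrictSupport R).2 (Or.inl μ.2)),
    Subtype.coe_inj, Module.Basis.apply_eq_iff]
  ext μ'
  simp [basisRestrictSupport_repr_apply, coeff_monomial, Finsupp.single_apply, Subtype.ext_iff]

end RestrictSupport

variable (K) in
lemma spanTerms_eq_restrictSupport (S : Set (Term n)) : spanTerms K S = restrictSupport K S :=
  (restrictSupport_eq_span K S).symm

variable (K) in
lemma homogeneousSubmodule_eq_restrictSupport (d : ℕ) :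
    homogeneousSubmodule (Fin (n + 1)) K d = restrictSupport K {μ | tdeg μ = d} := by
  rw [homogeneousSubmodule_eq_finsupp_supported]
  simp_rw [Finsupp.degree_eq_sum]
  rfl

lemma restrictSupport_Od_le (d : ℕ) : restrictSupport K (Od O d) ≤ restrictSupport K O :=
  restrictSupport_mono K fun _ h => h.1

lemma restrictSupport_Od_le_homogeneousSubmodule (d : ℕ) :
    restrictSupport K (Od O d) ≤ homogeneousSubmodule (Fin (n + 1)) K d := by
  rw [homogeneousSubmodule_eq_restrictSupport]
  exact restrictSupport_mono K fun _ h => h.2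

section Operators

variable (O : Set (Term n)) (g : Term n → MvPolynomial (Fin (n + 1)) K)

open scoped Classical in
noncomputable def reduceTerm (σ : Term n) : MvPolynomial (Fin (n + 1)) K :=
  if σ ∈ O then monomial σ 1 else monomial σ 1 - g σ

open scoped Classical in
/-- The formal multiplication by `x_r` on `⟨𝒪⟩`, extended by zero on the terms outside `𝒪`
so that these operators commute as soon as they commute on `⟨𝒪⟩`. -/
noncomputable def mulOp (r : Fin (n + 1)) : Module.End K (MvPolynomial (Fin (n + 1)) K) :=
  (basisMonomials (Fin (n + 1)) K).constr K fun τ =>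
    if τ ∈ O then reduceTerm O g (τ + single r 1) else 0

variable {O g}

open scoped Classical in
lemma mulOp_monomial (r : Fin (n + 1)) (τ : Term n) :
    mulOp O g r (monomial τ 1) = if τ ∈ O then reduceTerm O g (τ + single r 1) else 0 := by
  rw [mulOp]
  simpa using (basisMonomials (Fin (n + 1)) K).constr_basis K
    (fun τ => if τ ∈ O then reduceTerm O g (τ + single r 1) else 0) τ

lemma mulOp_monomial_of_mem {τ : Term n} (hτ : τ ∈ O) (r : Fin (n + 1)) :
    mulOp O g r (monomial τ 1) = reduceTerm O g (τ + single r 1) := by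
  rw [mulOp_monomial, if_pos hτ]

lemma reduceTerm_mem_restrictSupport (hg : IsPrebasis O g) {τ : Term n} (hτ : τ ∈ O)
    (r : Fin (n + 1)) :
    reduceTerm O g (τ + single r 1) ∈ restrictSupport K (Od O (tdeg τ + 1)) := by
  have hdeg : tdeg (τ + single r 1) = tdeg τ + 1 := by rw [tdeg_add, tdeg_single]
  rw [← hdeg, reduceTerm]
  split_ifs with h
  · exact (monomial_mem_restrictSupport K).2 (Or.inl ⟨h, rfl⟩)
  · exact fun μ hμ => hg _ ⟨h, r, τ, hτ, rfl⟩ μ hμ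

lemma mulOp_mem_restrictSupport (hg : IsPrebasis O g) (r : Fin (n + 1)) {d : ℕ}
    {p : MvPolynomial (Fin (n + 1)) K} (hp : p ∈ restrictSupport K (Od O d)) :
    mulOp O g r p ∈ restrictSupport K (Od O (d + 1)) := by
  rw [restrictSupport_eq_span] at hp
  refine (Submodule.span_le (p := (restrictSupport K (Od O (d + 1))).comap (mulOp O g r))).2
    ?_ hp
  rintro _ ⟨τ, ⟨hτ, rfl⟩, rfl⟩
  rw [SetLike.mem_coe, Submodule.mem_comap, mulOp_monomial_of_mem hτ]
  exact reduceTerm_mem_restrictSupport hg hτ r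

lemma X_mul_sub_mulOp_mem_idealG (r : Fin (n + 1)) {p : MvPolynomial (Fin (n + 1)) K}
    (hp : p ∈ restrictSupport K O) : X r * p - mulOp O g r p ∈ idealG O g := by
  let I := (idealG O g).restrictScalars K
  rw [restrictSupport_eq_span] at hp
  refine (Submodule.span_le (p := I.comap (LinearMap.mulLeft K (X r) - mulOp O g r))).2 ?_ hp
  rintro _ ⟨τ, hτ, rfl⟩
  rw [SetLike.mem_coe, Submodule.mem_comap, LinearMap.sub_apply, LinearMap.mulLeft_apply,
    mulOp_monomial_of_mem hτ, ← monomial_add_single_one, reduceTerm]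
  split_ifs with h
  · rw [sub_self]
    exact Submodule.zero_mem _
  · rw [sub_sub_cancel]
    exact Ideal.subset_span ⟨_, ⟨h, r, τ, hτ, rfl⟩, rfl⟩

end Operators

section Matrices

variable {O : Set (Term n)} {g : Term n → MvPolynomial (Fin (n + 1)) K}

lemma multMatrix_apply (r : Fin (n + 1)) {d : ℕ} (τ' : OdSub O (d + 1)) (τ : OdSub O d) :
    multMatrix O g r d τ' τ = (mulOp O g r (monomial τ.1 1)).coeff τ'.1 := by
  rw [mulOp_monomial_of_mem τ.2.1, reduceTerm, multMatrix, Matrix.of_apply]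
  split_ifs <;> simp [coeff_monomial, *]

lemma multMatrix_eq_toMatrix (hg : IsPrebasis O g) (r : Fin (n + 1)) (d : ℕ) :
    multMatrix O g r d =
      LinearMap.toMatrix (basisRestrictSupport K (Od O d)) (basisRestrictSupport K (Od O (d + 1)))
        ((mulOp O g r).restrict fun _ => mulOp_mem_restrictSupport hg r) := by
  ext τ' τ
  rw [LinearMap.toMatrix_apply, basisRestrictSupport_repr_apply, LinearMap.coe_restrict_apply,
    basisRestrictSupport_apply, multMatrix_apply]

lemma multMatrix_mul_comm_iff (hg : IsPrebasis O g) (r s : Fin (n + 1)) (d : ℕ) :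
    multMatrix O g r (d + 1) * multMatrix O g s d =
        multMatrix O g s (d + 1) * multMatrix O g r d ↔
      ∀ τ ∈ Od O d, mulOp O g r (mulOp O g s (monomial τ 1)) =
        mulOp O g s (mulOp O g r (monomial τ 1)) := by
  simp_rw [multMatrix_eq_toMatrix hg, ← LinearMap.toMatrix_comp]
  rw [(LinearMap.toMatrix _ _).injective.eq_iff]
  let b := basisRestrictSupport K (Od O d)
  refine ⟨fun h τ hτ => ?_, fun h => b.ext fun τ => Subtype.ext ?_⟩
  · simpa [b, basisRestrictSupport_apply] using
      congrArg Subtype.val (LinearMap.congr_fun h (b ⟨τ, hτ⟩))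
  · simpa [b, basisRestrictSupport_apply] using h τ.1 τ.2

end Matrices

section NormalForm

variable {O : Set (Term n)} {g : Term n → MvPolynomial (Fin (n + 1)) K}

variable (O g) in
/-- `N f = f(mulOp O g 0, …, mulOp O g n) 1`. Such an `N` exists once the operators commute, and
it then computes normal forms modulo `(G)`. -/
def IsNormalFormMap (N : Module.End K (MvPolynomial (Fin (n + 1)) K)) : Prop :=
  N 1 = 1 ∧ ∀ r f, N (X r * f) = mulOp O g r (N f)

open scoped IsMulCommutative in
lemma exists_isNormalFormMap (hcomm : ∀ r s, Commute (mulOp O g r) (mulOp O g s)) :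
    ∃ N, IsNormalFormMap O g N := by
  let A := Algebra.adjoin K (Set.range (mulOp O g))
  have : IsMulCommutative A :=
    Algebra.isMulCommutative_adjoin K (by rintro _ ⟨r, rfl⟩ _ ⟨s, rfl⟩; exact hcomm r s)
  let φ : MvPolynomial (Fin (n + 1)) K →ₐ[K] A :=
    aeval fun r => ⟨mulOp O g r, Algebra.subset_adjoin ⟨r, rfl⟩⟩
  refine ⟨LinearMap.applyₗ 1 ∘ₗ A.val.toLinearMap ∘ₗ φ.toLinearMap, ?_, fun r f => ?_⟩
  · simp
  · simp [φ]

namespace IsNormalFormMap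

variable {N : Module.End K (MvPolynomial (Fin (n + 1)) K)}

lemma apply_mul_eq_zero (hN : IsNormalFormMap O g N) {h : MvPolynomial (Fin (n + 1)) K}
    (hh : N h = 0) (f : MvPolynomial (Fin (n + 1)) K) : N (f * h) = 0 := by
  induction f using MvPolynomial.induction_on with
  | C a => rw [C_mul', map_smul, hh, smul_zero]
  | add p q hp hq => rw [add_mul, map_add, hp, hq, add_zero]
  | mul_X p r hp => rw [show p * X r * h = X r * (p * h) by ring, hN.2, hp, map_zero]

lemma apply_monomial_mem_restrictSupport (hN : IsNormalFormMap O g N) (hO : IsOrderIdeal O)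
    (hg : IsPrebasis O g) (μ : Term n) :
    N (monomial μ 1) ∈ restrictSupport K (Od O (tdeg μ)) := by
  induction μ using Term.induction_on_add_single with
  | zero =>
    rw [← one_def, hN.1, one_def]
    exact (monomial_mem_restrictSupport K).2 (Or.inl ⟨hO.zero_mem, by simp [tdeg]⟩)
  | add_single μ r ih =>
    rw [monomial_add_single_one, hN.2, tdeg_add, tdeg_single]
    exact mulOp_mem_restrictSupport hg r ih

lemma apply_monomial_of_mem (hN : IsNormalFormMap O g N) (hO : IsOrderIdeal O) {τ : Term n}
    (hτ : τ ∈ O) : N (monomial τ 1) = monomial τ 1 := by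
  induction τ using Term.induction_on_add_single with
  | zero => exact hN.1
  | add_single μ r ih =>
    rw [monomial_add_single_one, hN.2, ← monomial_add_single_one, ih (hO.mem_of_add_single hτ),
      mulOp_monomial_of_mem (hO.mem_of_add_single hτ), reduceTerm, if_pos hτ]

lemma apply_of_mem_restrictSupport (hN : IsNormalFormMap O g N) (hO : IsOrderIdeal O)
    {p : MvPolynomial (Fin (n + 1)) K} (hp : p ∈ restrictSupport K O) : N p = p := by
  rw [restrictSupport_eq_span] at hp
  refine LinearMap.eqOn_span' (g := LinearMap.id) ?_ hp
  rintro _ ⟨τ, hτ, rfl⟩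
  exact hN.apply_monomial_of_mem hO hτ

lemma sub_mem_idealG (hN : IsNormalFormMap O g N) (hO : IsOrderIdeal O) (hg : IsPrebasis O g)
    (f : MvPolynomial (Fin (n + 1)) K) : f - N f ∈ idealG O g := by
  have hmon (μ : Term n) : monomial μ 1 - N (monomial μ 1) ∈ idealG O g := by
    induction μ using Term.induction_on_add_single with
    | zero => rw [← one_def, hN.1, sub_self]; exact Submodule.zero_mem _
    | add_single μ r ih =>
      have hNμ : N (monomial μ 1) ∈ restrictSupport K O :=
        restrictSupport_Od_le _ (hN.apply_monomial_mem_restrictSupport hO hg μ)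
      rw [monomial_add_single_one, hN.2,
        show X r * monomial μ 1 - mulOp O g r (N (monomial μ 1)) =
          X r * (monomial μ 1 - N (monomial μ 1)) +
            (X r * N (monomial μ 1) - mulOp O g r (N (monomial μ 1))) by ring]
      exact add_mem (Ideal.mul_mem_left _ _ ih) (X_mul_sub_mulOp_mem_idealG r hNμ)
  induction f using MvPolynomial.induction_on' with
  | monomial μ a =>
    rw [← mul_one a, ← smul_eq_mul, ← smul_monomial, map_smul, ← smul_sub]
    exact Submodule.smul_of_tower_mem _ a (hmon μ)
  | add p q hp hq =>
    rw [map_add, add_sub_add_comm]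
    exact add_mem hp hq

lemma apply_eq_zero_of_mem_idealG (hN : IsNormalFormMap O g N) (hO : IsOrderIdeal O)
    (hg : IsPrebasis O g) {f : MvPolynomial (Fin (n + 1)) K} (hf : f ∈ idealG O g) :
    N f = 0 := by
  induction hf using Submodule.span_induction with
  | mem _ h =>
    obtain ⟨σ, ⟨hσ, r, τ, hτ, rfl⟩, rfl⟩ := h
    have hrest : monomial (τ + single r 1) 1 - g (τ + single r 1) ∈ restrictSupport K O :=
      fun μ hμ => (hg _ ⟨hσ, r, τ, hτ, rfl⟩ μ hμ).1
    rw [← sub_sub_cancel (monomial (τ + single r 1) 1) (g (τ + single r 1)), map_sub,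
      hN.apply_of_mem_restrictSupport hO hrest, monomial_add_single_one, hN.2,
      hN.apply_monomial_of_mem hO hτ, mulOp_monomial_of_mem hτ, reduceTerm, if_neg hσ,
      ← monomial_add_single_one, sub_self]
  | zero => exact map_zero N
  | add x y _ _ hx hy => rw [map_add, hx, hy, add_zero]
  | smul a x _ hx => exact hN.apply_mul_eq_zero hx a

lemma apply_mem_restrictSupport (hN : IsNormalFormMap O g N) (hO : IsOrderIdeal O)
    (hg : IsPrebasis O g) {d : ℕ} {f : MvPolynomial (Fin (n + 1)) K}
    (hf : f ∈ homogeneousSubmodule (Fin (n + 1)) K d) : N f ∈ restrictSupport K (Od O d) := by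
  rw [homogeneousSubmodule_eq_restrictSupport, restrictSupport_eq_span] at hf
  refine (Submodule.span_le (p := (restrictSupport K (Od O d)).comap N)).2 ?_ hf
  rintro _ ⟨μ, rfl, rfl⟩
  exact hN.apply_monomial_mem_restrictSupport hO hg μ

lemma degPart_sup_spanTerms (hN : IsNormalFormMap O g N) (hO : IsOrderIdeal O)
    (hg : IsPrebasis O g) (d : ℕ) :
    degPart (idealG O g) d ⊔ spanTerms K (Od O d) = homogeneousSubmodule (Fin (n + 1)) K d := by
  rw [spanTerms_eq_restrictSupport]
  refine le_antisymm (sup_le inf_le_right (restrictSupport_Od_le_homogeneousSubmodule d))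
    fun f hf => ?_
  have hNf := hN.apply_mem_restrictSupport hO hg hf
  exact Submodule.mem_sup.2 ⟨f - N f, ⟨hN.sub_mem_idealG hO hg f,
    sub_mem hf (restrictSupport_Od_le_homogeneousSubmodule d hNf)⟩, N f, hNf, sub_add_cancel f _⟩

lemma disjoint_degPart_spanTerms (hN : IsNormalFormMap O g N) (hO : IsOrderIdeal O)
    (hg : IsPrebasis O g) (d : ℕ) :
    Disjoint (degPart (idealG O g) d) (spanTerms K (Od O d)) := by
  rw [spanTerms_eq_restrictSupport, Submodule.disjoint_def]
  intro f hfI hfO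
  rw [← hN.apply_of_mem_restrictSupport hO (restrictSupport_Od_le d hfO)]
  exact hN.apply_eq_zero_of_mem_idealG hO hg hfI.1

end IsNormalFormMap

end NormalForm

section Commutation

variable {O : Set (Term n)} {g : Term n → MvPolynomial (Fin (n + 1)) K}

lemma X_mul_X_mul_sub_mulOp_mulOp_mem_idealG (hg : IsPrebasis O g) {τ : Term n} (hτ : τ ∈ O)
    (r s : Fin (n + 1)) :
    X r * (X s * monomial τ 1) - mulOp O g r (mulOp O g s (monomial τ 1)) ∈ idealG O g := by
  have hτ' : monomial τ (1 : K) ∈ restrictSupport K (Od O (tdeg τ)) :=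
    (monomial_mem_restrictSupport K).2 (Or.inl ⟨hτ, rfl⟩)
  rw [show X r * (X s * monomial τ 1) - mulOp O g r (mulOp O g s (monomial τ 1)) =
    X r * (X s * monomial τ 1 - mulOp O g s (monomial τ 1)) +
      (X r * mulOp O g s (monomial τ 1) - mulOp O g r (mulOp O g s (monomial τ 1))) by ring]
  exact add_mem
    (Ideal.mul_mem_left _ _ (X_mul_sub_mulOp_mem_idealG s (restrictSupport_Od_le _ hτ')))
    (X_mul_sub_mulOp_mem_idealG r (restrictSupport_Od_le _ (mulOp_mem_restrictSupport hg s hτ')))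

lemma mulOp_comm_of_disjoint (hg : IsPrebasis O g)
    (hB : ∀ d, Disjoint (degPart (idealG O g) d) (spanTerms K (Od O d)))
    {τ : Term n} (hτ : τ ∈ O) (r s : Fin (n + 1)) :
    mulOp O g r (mulOp O g s (monomial τ 1)) = mulOp O g s (mulOp O g r (monomial τ 1)) := by
  have hτ' : monomial τ (1 : K) ∈ restrictSupport K (Od O (tdeg τ)) :=
    (monomial_mem_restrictSupport K).2 (Or.inl ⟨hτ, rfl⟩)
  have hsub : mulOp O g r (mulOp O g s (monomial τ 1)) - mulOp O g s (mulOp O g r (monomial τ 1))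
      ∈ restrictSupport K (Od O (tdeg τ + 1 + 1)) :=
    sub_mem (mulOp_mem_restrictSupport hg r (mulOp_mem_restrictSupport hg s hτ'))
      (mulOp_mem_restrictSupport hg s (mulOp_mem_restrictSupport hg r hτ'))
  have hI := sub_mem (X_mul_X_mul_sub_mulOp_mulOp_mem_idealG hg hτ s r)
    (X_mul_X_mul_sub_mulOp_mulOp_mem_idealG hg hτ r s)
  rw [mul_left_comm, sub_sub_sub_cancel_left] at hI
  have hd := hB (tdeg τ + 1 + 1)
  rw [spanTerms_eq_restrictSupport, Submodule.disjoint_def] at hd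
  exact sub_eq_zero.1 (hd _ ⟨hI, restrictSupport_Od_le_homogeneousSubmodule _ hsub⟩ hsub)

lemma mulOp_comm_of_tdeg_lt (hO : IsOrderIdeal O) {τ : Term n} (hτ : τ ∈ O)
    (h : tdeg τ + 1 < minDegBorder O) (r s : Fin (n + 1)) :
    mulOp O g r (mulOp O g s (monomial τ 1)) = mulOp O g s (mulOp O g r (monomial τ 1)) := by
  have hmem (t : Fin (n + 1)) : τ + single t 1 ∈ O :=
    hO.mem_of_tdeg_lt (by rwa [tdeg_add, tdeg_single])
  rw [mulOp_monomial_of_mem hτ, mulOp_monomial_of_mem hτ, reduceTerm, if_pos (hmem s), reduceTerm,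
    if_pos (hmem r), mulOp_monomial_of_mem (hmem s), mulOp_monomial_of_mem (hmem r),
    add_right_comm]

lemma commute_mulOp_of_forall_mem {r s : Fin (n + 1)}
    (h : ∀ τ ∈ O, mulOp O g r (mulOp O g s (monomial τ 1)) =
      mulOp O g s (mulOp O g r (monomial τ 1))) :
    Commute (mulOp O g r) (mulOp O g s) := by
  refine (basisMonomials (Fin (n + 1)) K).ext fun τ => ?_
  by_cases hτ : τ ∈ O
  · simpa using h τ hτ
  · simp [mulOp_monomial, hτ]

lemma commute_mulOp_of_multMatrix_comm (hO : IsOrderIdeal O) (hg : IsPrebasis O g)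
    (hM : ∀ d : ℕ, minDegBorder O - 1 ≤ d → ∀ r s : Fin (n + 1), r < s →
      multMatrix O g r (d + 1) * multMatrix O g s d =
        multMatrix O g s (d + 1) * multMatrix O g r d)
    (r s : Fin (n + 1)) : Commute (mulOp O g r) (mulOp O g s) := by
  wlog hrs : r < s generalizing r s
  · rcases (not_lt.1 hrs).eq_or_lt with rfl | hsr
    · exact Commute.refl _
    · exact (this s r hsr).symm
  refine commute_mulOp_of_forall_mem fun τ hτ => ?_
  by_cases hd : minDegBorder O - 1 ≤ tdeg τ
  · exact (multMatrix_mul_comm_iff hg r s _).1 (hM _ hd r s hrs) τ ⟨hτ, rfl⟩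
  · exact mulOp_comm_of_tdeg_lt hO hτ (by omega) r s

end Commutation

theorem char_by_matrices_from_mindeg_general (O : Set (Term n)) (hO : IsOrderIdeal O)
    (g : Term n → MvPolynomial (Fin (n + 1)) K) (hg : IsPrebasis O g) :
    IsBorderBasisOf O g (idealG O g) ↔
      ∀ d : ℕ, minDegBorder O - 1 ≤ d → ∀ r s : Fin (n + 1), r < s →
        multMatrix O g r (d + 1) * multMatrix O g s d =
          multMatrix O g s (d + 1) * multMatrix O g r d := by
  constructor
  · intro hB d _ r s _
    exact (multMatrix_mul_comm_iff hg r s d).2 fun τ hτ =>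
      mulOp_comm_of_disjoint hg (fun d => (hB.2.2 d).2) hτ.1 r s
  · intro hM
    obtain ⟨N, hN⟩ := exists_isNormalFormMap (commute_mulOp_of_multMatrix_comm hO hg hM)
    exact ⟨hg, fun σ hσ => Ideal.subset_span ⟨σ, hσ, rfl⟩, fun d =>
      ⟨hN.degPart_sup_spanTerms hO hg d, hN.disjoint_degPart_spanTerms hO hg d⟩⟩

/-- **Refined characterization by formal multiplication matrices.** `G` is a homogeneous
`∂𝒪`-basis iff `Χ_r^{(d+1)}Χ_s^{(d)} = Χ_s^{(d+1)}Χ_r^{(d)}` for every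
`d ≥ mindeg(∂𝒪) - 1` and all `0 ≤ r < s ≤ n`. -/
theorem char_by_matrices_from_mindeg (O : Set (Term n)) (hO : IsOrderIdeal O)
    (hinf : O.Infinite)
    (g : Term n → MvPolynomial (Fin (n + 1)) K) (hg : IsPrebasis O g) :
    IsBorderBasisOf O g (idealG O g) ↔
      ∀ d : ℕ, minDegBorder O - 1 ≤ d → ∀ r s : Fin (n + 1), r < s →
        multMatrix O g r (d + 1) * multMatrix O g s d =
          multMatrix O g s (d + 1) * multMatrix O g r d :=
  char_by_matrices_from_mindeg_general O hO g hg

end Border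
end
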